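/- arXiv:1403.7787 — 6 statements merged into one kernel-verified Lean document; each statement's English description precedes it below -/
import Mathlib

section
/- Let P ⊂ ℝ^d and Q ⊂ ℝ^e be integral convex polytopes containing 0_d and 0_e, respectively. If the free sum P ⊕ Q possesses the integer decomposition property, then each of P and Q possesses the integer decomposition property. -/
open scoped BigOperators Pointwise

/-- A point of `ℝ^d` with integer coordinates. -/
def IsLatticePt (d : ℕ) (x : Fin d → ℝ) : Prop := ∀ i, ∃ z : ℤ, x i = (z : ℝ)

/-- The lattice points of a subset of `ℝ^d`. -/
def latticePts (d : ℕ) (P : Set (Fin d → ℝ)) : Set (Fin d → ℝ) := {x ∈ P | IsLatticePt d x}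

/-- An integral convex polytope: the convex hull of a finite set of lattice points. -/
def IsIntegralPolytope (d : ℕ) (P : Set (Fin d → ℝ)) : Prop :=
  ∃ S : Finset (Fin d → ℝ), (∀ v ∈ S, IsLatticePt d v) ∧ P = convexHull ℝ (↑S : Set (Fin d → ℝ))

/-- A `(0,1)`-polytope: the convex hull of a finite set of `(0,1)`-vectors. -/
def Is01Polytope (d : ℕ) (P : Set (Fin d → ℝ)) : Prop :=
  ∃ S : Finset (Fin d → ℝ), (∀ v ∈ S, ∀ i, v i = 0 ∨ v i = 1) ∧
    P = convexHull ℝ (↑S : Set (Fin d → ℝ))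

/-- The integer decomposition property. -/
def HasIDP (d : ℕ) (P : Set (Fin d → ℝ)) : Prop :=
  ∀ n : ℕ, 1 ≤ n → ∀ γ ∈ (n : ℝ) • P, IsLatticePt d γ →
    ∃ f : Fin n → (Fin d → ℝ), (∀ i, f i ∈ latticePts d P) ∧ γ = ∑ i, f i

/-- The canonical injection `μ : ℝ^d → ℝ^{d+e}`, `μ(α) = (α, 0)`. -/
def muMap (d e : ℕ) (x : Fin d → ℝ) : Fin (d + e) → ℝ := Fin.append x 0

/-- The canonical injection `ν : ℝ^e → ℝ^{d+e}`, `ν(β) = (0, β)`. -/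
def nuMap (d e : ℕ) (y : Fin e → ℝ) : Fin (d + e) → ℝ := Fin.append 0 y

/-- The free sum `P ⊕ Q`. -/
def freeSum (d e : ℕ) (P : Set (Fin d → ℝ)) (Q : Set (Fin e → ℝ)) : Set (Fin (d + e) → ℝ) :=
  convexHull ℝ (muMap d e '' P ∪ nuMap d e '' Q)

/-- Condition (★): `(P ⊕ Q) ∩ ℤ^{d+e} = μ(P ∩ ℤ^d) ∪ ν(Q ∩ ℤ^e)`. -/
def StarCond (d e : ℕ) (P : Set (Fin d → ℝ)) (Q : Set (Fin e → ℝ)) : Prop :=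
  latticePts (d + e) (freeSum d e P Q) = muMap d e '' latticePts d P ∪ nuMap d e '' latticePts e Q

/-- `ℤ(P ∩ ℤ^d) = ℤ^d`: the lattice points of `P` generate `ℤ^d` as an abelian group. -/
def SpansLattice (d : ℕ) (P : Set (Fin d → ℝ)) : Prop :=
  ∀ x : Fin d → ℝ, IsLatticePt d x → x ∈ Submodule.span ℤ (latticePts d P)

/-- The facet condition: the defining equation of each facet (face of dimension `d-1`)
of `P` is of the form `∑ aᵢ zᵢ = b` with `aᵢ ∈ ℤ` and `b ∈ {0,1}`,
where `P ⊆ {z : ∑ aᵢ zᵢ ≤ b}`. -/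
def FacetCondition (d : ℕ) (P : Set (Fin d → ℝ)) : Prop :=
  ∀ F : Set (Fin d → ℝ), IsExposed ℝ P F → F.Nonempty →
    Module.finrank ℝ (vectorSpan ℝ F) = d - 1 →
    ∃ (a : Fin d → ℤ) (b : ℤ), a ≠ 0 ∧ (b = 0 ∨ b = 1) ∧
      (∀ x ∈ P, ∑ i, (a i : ℝ) * x i ≤ (b : ℝ)) ∧
      (∀ x ∈ P, (x ∈ F ↔ ∑ i, (a i : ℝ) * x i = (b : ℝ)))

/-- `int(W)`: the lattice points of `conv(W ∪ {0})` not lying on its relative boundary. -/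
noncomputable def intW (d : ℕ) (W : Finset (Fin d → ℝ)) : Set (Fin d → ℝ) :=
  {x ∈ intrinsicInterior ℝ (convexHull ℝ ((↑W : Set (Fin d → ℝ)) ∪ {0})) | IsLatticePt d x}

/-- `𝒲(P)`: linearly independent sets of nonzero vertices of `P` with `int(W) ≠ ∅`. -/
def Wfam (d : ℕ) (P : Set (Fin d → ℝ)) : Set (Finset (Fin d → ℝ)) :=
  {W | (↑W : Set (Fin d → ℝ)) ⊆ (P.extremePoints ℝ) \ {0} ∧
    LinearIndependent ℝ (fun w : (↑W : Set (Fin d → ℝ)) => (w : Fin d → ℝ)) ∧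
    (intW d W).Nonempty}

/-- The set `{ r_1 + ⋯ + r_m : ∑ rᵢ wᵢ ∈ int(W) }`. -/
def coeffSums (d : ℕ) (W : Finset (Fin d → ℝ)) : Set ℝ :=
  {s | ∃ r : (Fin d → ℝ) → ℝ, s = ∑ w ∈ W, r w ∧ (∑ w ∈ W, r w • w) ∈ intW d W}

/-- `min(W)`. -/
noncomputable def minW (d : ℕ) (W : Finset (Fin d → ℝ)) : ℝ := sInf (coeffSums d W)

/-- The `n`-fold sumset of the lattice points of `P`. -/
def nSumset (d : ℕ) (P : Set (Fin d → ℝ)) (n : ℕ) : Set (Fin d → ℝ) :=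
  {γ | ∃ f : Fin n → (Fin d → ℝ), (∀ i, f i ∈ latticePts d P) ∧ γ = ∑ i, f i}

/-- The Hilbert function `H_P`. -/
noncomputable def HilbF (d : ℕ) (P : Set (Fin d → ℝ)) : ℕ → ℕ
  | 0 => 1
  | (n+1) => (nSumset d P (n+1)).ncard

/-- The Ehrhart counting function `i(P, n) = |nP ∩ ℤ^d|`, with `i(P,0) = 1`. -/
noncomputable def EhrI (d : ℕ) (P : Set (Fin d → ℝ)) : ℕ → ℤ
  | 0 => 1
  | (n+1) => ((latticePts d ((((n : ℕ)+1 : ℕ) : ℝ) • P)).ncard : ℤ)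

/-- The coefficients of the δ-polynomial (computed with respect to dimension `d`):
`δ_n(P) = ∑_{j=0}^{n} (−1)^j C(d+1, j) i(P, n−j)`. -/
noncomputable def deltaCoeff (d : ℕ) (P : Set (Fin d → ℝ)) (n : ℕ) : ℤ :=
  ∑ j ∈ Finset.range (n+1), (-1:ℤ)^j * ((d+1).choose j : ℤ) * EhrI d P (n-j)

/-- The configuration `𝒜 = {(α,1) : α ∈ P ∩ ℤ^d} ⊆ ℤ^{d+1}`. -/
def Config (d : ℕ) (P : Set (Fin d → ℝ)) : Set (Fin (d+1) → ℤ) :=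
  {a | (fun i : Fin d => ((a i.castSucc : ℤ) : ℝ)) ∈ P ∧ a (Fin.last d) = 1}

/-- Normality of a configuration: `ℤ_{≥0}𝒜 = ℤ𝒜 ∩ ℚ_{≥0}𝒜`. -/
def IsNormalConfig (n : ℕ) (A : Set (Fin n → ℤ)) : Prop :=
  ∀ x : Fin n → ℤ,
    x ∈ AddSubmonoid.closure A ↔
      (x ∈ AddSubgroup.closure A ∧
        ∃ (T : Finset (Fin n → ℤ)) (c : (Fin n → ℤ) → ℚ), (↑T : Set (Fin n → ℤ)) ⊆ A ∧
          (∀ a, 0 ≤ c a) ∧ (fun i => ((x i : ℤ) : ℚ)) = ∑ a ∈ T, c a • (fun i => ((a i : ℤ) : ℚ)))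

theorem hasIDP_of_freeSum_hasIDP (d e : ℕ) (P : Set (Fin d → ℝ)) (Q : Set (Fin e → ℝ))
    (hP : IsIntegralPolytope d P) (hQ : IsIntegralPolytope e Q)
    (hP0 : (0 : Fin d → ℝ) ∈ P) (hQ0 : (0 : Fin e → ℝ) ∈ Q)
    (h : HasIDP (d + e) (freeSum d e P Q)) :
    HasIDP d P ∧ HasIDP e Q := by
  obtain ⟨SP, -, hPeq⟩ := hP
  obtain ⟨SQ, -, hQeq⟩ := hQ
  have hPconv : Convex ℝ P := hPeq ▸ convex_convexHull ℝ _
  have hQconv : Convex ℝ Q := hQeq ▸ convex_convexHull ℝ _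
  -- projections
  let projd : (Fin (d+e) → ℝ) →ₗ[ℝ] (Fin d → ℝ) :=
    { toFun := fun x j => x (Fin.castAdd e j)
      map_add' := fun x y => rfl
      map_smul' := fun c x => rfl }
  let proje : (Fin (d+e) → ℝ) →ₗ[ℝ] (Fin e → ℝ) :=
    { toFun := fun x j => x (Fin.natAdd d j)
      map_add' := fun x y => rfl
      map_smul' := fun c x => rfl }
  have hsubP : freeSum d e P Q ⊆ projd ⁻¹' P := by
    apply convexHull_min
    · rintro x (⟨p, hp, rfl⟩ | ⟨q, hq, rfl⟩)
      · show (fun j => muMap d e p (Fin.castAdd e j)) ∈ P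
        simpa [muMap, Fin.append_left] using hp
      · show (fun j => nuMap d e q (Fin.castAdd e j)) ∈ P
        simpa [nuMap, Fin.append_left] using (show (fun _ => (0:ℝ)) ∈ P from hP0)
    · exact hPconv.linear_preimage projd
  have hsubQ : freeSum d e P Q ⊆ proje ⁻¹' Q := by
    apply convexHull_min
    · rintro x (⟨p, hp, rfl⟩ | ⟨q, hq, rfl⟩)
      · show (fun j => muMap d e p (Fin.natAdd d j)) ∈ Q
        simpa [muMap, Fin.append_right] using (show (fun _ => (0:ℝ)) ∈ Q from hQ0)
      · show (fun j => nuMap d e q (Fin.natAdd d j)) ∈ Q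
        simpa [nuMap, Fin.append_right] using hq
    · exact hQconv.linear_preimage proje
  constructor
  · intro n hn γ hγ hγint
    obtain ⟨p, hp, hpe⟩ := hγ
    have hmem : muMap d e γ ∈ (n : ℝ) • freeSum d e P Q := by
      refine ⟨muMap d e p, subset_convexHull ℝ _ (Or.inl ⟨p, hp, rfl⟩), ?_⟩
      funext i
      refine Fin.addCases (fun j => ?_) (fun j => ?_) i
      · simp [muMap, Fin.append_left, ← hpe]
      · simp [muMap, Fin.append_right]
    have hlat : IsLatticePt (d + e) (muMap d e γ) := by
      intro i
      refine Fin.addCases (fun j => ?_) (fun j => ?_) i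
      · obtain ⟨z, hz⟩ := hγint j
        exact ⟨z, by simpa [muMap, Fin.append_left] using hz⟩
      · exact ⟨0, by simp [muMap, Fin.append_right]⟩
    obtain ⟨f, hf, hsum⟩ := h n hn _ hmem hlat
    refine ⟨fun i => projd (f i), fun i => ⟨hsubP (hf i).1, fun j => (hf i).2 (Fin.castAdd e j)⟩, ?_⟩
    funext j
    have := congrFun hsum (Fin.castAdd e j)
    simpa [muMap, Fin.append_left, projd, Finset.sum_apply] using this
  · intro n hn γ hγ hγint
    obtain ⟨q, hq, hqe⟩ := hγ
    have hmem : nuMap d e γ ∈ (n : ℝ) • freeSum d e P Q := by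
      refine ⟨nuMap d e q, subset_convexHull ℝ _ (Or.inr ⟨q, hq, rfl⟩), ?_⟩
      funext i
      refine Fin.addCases (fun j => ?_) (fun j => ?_) i
      · simp [nuMap, Fin.append_left]
      · simp [nuMap, Fin.append_right, ← hqe]
    have hlat : IsLatticePt (d + e) (nuMap d e γ) := by
      intro i
      refine Fin.addCases (fun j => ?_) (fun j => ?_) i
      · exact ⟨0, by simp [nuMap, Fin.append_left]⟩
      · obtain ⟨z, hz⟩ := hγint j
        exact ⟨z, by simpa [nuMap, Fin.append_right] using hz⟩
    obtain ⟨f, hf, hsum⟩ := h n hn _ hmem hlat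
    refine ⟨fun i => proje (f i), fun i => ⟨hsubQ (hf i).1, fun j => (hf i).2 (Fin.natAdd d j)⟩, ?_⟩
    funext j
    have := congrFun hsum (Fin.natAdd d j)
    simpa [nuMap, Fin.append_right, proje, Finset.sum_apply] using this
end

section
/- Let P ⊂ ℝ^d and Q ⊂ ℝ^e be integral convex polytopes of dimension d and e containing 0_d and 0_e, respectively, and suppose condition (★) holds. Then for every integer n ≥ 1, H_{P⊕Q}(n) = Σ_{i+j=n} H_P(i)·H_Q(j) − Σ_{i+j=n−1} H_P(i)·H_Q(j), where H_{P⊕Q} is computed for the lattice points of P ⊕ Q in ℤ^{d+e}. (Equivalently, the h-polynomial of the toric ring K[𝒜 ⊕ ℬ] of the free sum equals the product h(K[𝒜])·h(K[ℬ]), where 𝒜 and ℬ are the configurations arising from P and Q.) -/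
open scoped BigOperators Pointwise

lemma isLatticePt_zero (d : ℕ) : IsLatticePt d 0 := fun _ => ⟨0, by simp⟩

def muHom (d e : ℕ) : (Fin d → ℝ) →+ (Fin (d + e) → ℝ) where
  toFun := muMap d e
  map_zero' := by
    funext i
    refine Fin.addCases (fun i => ?_) (fun i => ?_) i <;>
      simp [muMap, Fin.append_left, Fin.append_right]
  map_add' x y := by
    funext i
    refine Fin.addCases (fun i => ?_) (fun i => ?_) i <;>
      simp [muMap, Fin.append_left, Fin.append_right]

def nuHom (d e : ℕ) : (Fin e → ℝ) →+ (Fin (d + e) → ℝ) where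
  toFun := nuMap d e
  map_zero' := by
    funext i
    refine Fin.addCases (fun i => ?_) (fun i => ?_) i <;>
      simp [nuMap, Fin.append_left, Fin.append_right]
  map_add' x y := by
    funext i
    refine Fin.addCases (fun i => ?_) (fun i => ?_) i <;>
      simp [nuMap, Fin.append_left, Fin.append_right]

lemma mu_add_nu_inj (d e : ℕ) :
    Function.Injective (fun p : (Fin d → ℝ) × (Fin e → ℝ) => muMap d e p.1 + nuMap d e p.2) := by
  rintro ⟨x, y⟩ ⟨x', y'⟩ h
  simp only [Prod.mk.injEq]
  constructor
  · funext i
    have := congrFun h (Fin.castAdd e i)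
    simpa [muMap, nuMap, Fin.append_left] using this
  · funext i
    have := congrFun h (Fin.natAdd d i)
    simpa [muMap, nuMap, Fin.append_right] using this

lemma finite_lattice_of_bounded {d : ℕ} {s : Set (Fin d → ℝ)}
    (hs : Bornology.IsBounded s) : (latticePts d s).Finite := by
  obtain ⟨R, hR⟩ := isBounded_iff_forall_norm_le.1 hs
  have : latticePts d s ⊆
      (fun z : Fin d → ℤ => fun i => (z i : ℝ)) ''
        (Set.pi Set.univ fun _ => (Set.Icc (-⌈R⌉) ⌈R⌉ : Set ℤ)) := by
    rintro x ⟨hxs, hx⟩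
    refine ⟨fun i => (hx i).choose, ?_, ?_⟩
    · intro i _
      have hxi : x i = ((hx i).choose : ℝ) := (hx i).choose_spec
      have h1 : ‖x i‖ ≤ R := (norm_le_pi_norm x i).trans (hR x hxs)
      have h2 : |((hx i).choose : ℝ)| ≤ (⌈R⌉ : ℝ) := by
        rw [← hxi]; exact h1.trans (Int.le_ceil R)
      rw [← Int.cast_abs, Int.cast_le] at h2
      exact Set.mem_Icc.2 (abs_le.1 h2)
    · funext i; exact ((hx i).choose_spec).symm
  exact Set.Finite.subset ((Set.Finite.pi fun _ => Set.finite_Icc _ _).image _) this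

lemma muHom_apply (d e : ℕ) (x : Fin d → ℝ) : muHom d e x = muMap d e x := rfl
lemma nuHom_apply (d e : ℕ) (y : Fin e → ℝ) : nuHom d e y = nuMap d e y := rfl

lemma nSumset_zero (d : ℕ) (P : Set (Fin d → ℝ)) : nSumset d P 0 = {0} := by
  ext x
  constructor
  · rintro ⟨f, -, rfl⟩; simp
  · rintro rfl; exact ⟨fun i => 0, fun i => i.elim0, by simp⟩

lemma hilbF_cast (d : ℕ) (P : Set (Fin d → ℝ)) (n : ℕ) :
    (HilbF d P n : ℤ) = ((nSumset d P n).ncard : ℤ) := by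
  cases n with
  | zero => simp [HilbF, nSumset_zero]
  | succ n => rfl

lemma sum_mem_nSumset {d : ℕ} {P : Set (Fin d → ℝ)} {ι : Type*} (s : Finset ι)
    (x : ι → (Fin d → ℝ)) (hx : ∀ k ∈ s, x k ∈ latticePts d P) :
    (∑ k ∈ s, x k) ∈ nSumset d P s.card := by
  refine ⟨fun j => x (s.equivFin.symm j), fun j => hx _ (s.equivFin.symm j).2, ?_⟩
  rw [← Finset.sum_coe_sort s x]
  exact (Fintype.sum_equiv s.equivFin.symm (fun j => x (s.equivFin.symm j)) (fun a => x a) (fun j => rfl)).symm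

lemma nSumset_mono {d : ℕ} {P : Set (Fin d → ℝ)} (h0 : (0 : Fin d → ℝ) ∈ P)
    {i j : ℕ} (hij : i ≤ j) : nSumset d P i ⊆ nSumset d P j := by
  induction j with
  | zero => rw [Nat.le_zero.1 hij]
  | succ j ih =>
    rcases Nat.lt_or_ge i (j+1) with h | h
    · refine (ih (Nat.lt_succ_iff.1 h)).trans ?_
      rintro γ ⟨f, hf, rfl⟩
      refine ⟨Fin.snoc f 0, ?_, ?_⟩
      · intro k
        refine Fin.lastCases ?_ (fun k => ?_) k
        · simpa [Fin.snoc_last] using ⟨h0, isLatticePt_zero d⟩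
        · simpa [Fin.snoc_castSucc] using hf k
      · rw [Fin.sum_univ_castSucc]
        simp
    · have : i = j + 1 := le_antisymm hij h
      subst this; exact Set.Subset.rfl

lemma nSumset_finite {d : ℕ} {P : Set (Fin d → ℝ)} (hL : (latticePts d P).Finite) (n : ℕ) :
    (nSumset d P n).Finite := by
  have : nSumset d P n ⊆ (fun f : Fin n → (Fin d → ℝ) => ∑ i, f i) ''
      (Set.pi Set.univ fun _ => latticePts d P) := by
    rintro γ ⟨f, hf, rfl⟩
    exact ⟨f, fun i _ => hf i, rfl⟩
  exact Set.Finite.subset ((Set.Finite.pi fun _ => hL).image _) this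

lemma ncard_prod' {α β : Type*} (s : Set α) (t : Set β) :
    (s ×ˢ t).ncard = s.ncard * t.ncard := by
  rw [← Nat.card_coe_set_eq, ← Nat.card_coe_set_eq, ← Nat.card_coe_set_eq,
    ← Nat.card_prod]
  exact Nat.card_congr (Equiv.Set.prod s t)

lemma union_ncard {α β γ : Type*} {φ : α × β → γ} (hφ : Function.Injective φ)
    (A : ℕ → Set α) (B : ℕ → Set β)
    (hA : ∀ {i j : ℕ}, i ≤ j → A i ⊆ A j) (hB : ∀ {i j : ℕ}, i ≤ j → B i ⊆ B j)
    (hAf : ∀ i, (A i).Finite) (hBf : ∀ i, (B i).Finite) (n : ℕ) :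
    ∀ m : ℕ,
    (((⋃ i ∈ Finset.range (m + 1), φ '' (A i ×ˢ B (n - i))).ncard : ℤ)) =
      (∑ i ∈ Finset.range (m + 1), ((A i).ncard : ℤ) * ((B (n - i)).ncard : ℤ)) -
      (∑ i ∈ Finset.range m, ((A i).ncard : ℤ) * ((B (n - 1 - i)).ncard : ℤ)) := by
  have himg : ∀ i j, ((φ '' (A i ×ˢ B j)).ncard : ℤ) = ((A i).ncard : ℤ) * ((B j).ncard : ℤ) := by
    intro i j
    rw [Set.ncard_image_of_injective _ hφ, ncard_prod']
    push_cast; ring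
  have hfin : ∀ i j, (φ '' (A i ×ˢ B j)).Finite := fun i j =>
    (((hAf i).prod (hBf j)).image _)
  intro m
  induction m with
  | zero => simp [himg 0 n]
  | succ m ih =>
    have hDfin : (⋃ i ∈ Finset.range (m + 1), φ '' (A i ×ˢ B (n - i))).Finite :=
      (Finset.range (m+1)).finite_toSet.biUnion (fun i _ => hfin i (n - i))
    have hsplit : (⋃ i ∈ Finset.range (m + 2), φ '' (A i ×ˢ B (n - i))) =
        (φ '' (A (m+1) ×ˢ B (n - (m+1)))) ∪
          (⋃ i ∈ Finset.range (m + 1), φ '' (A i ×ˢ B (n - i))) := by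
      rw [Finset.range_add_one]
      simp [Set.biUnion_insert]
    have hinter : (φ '' (A (m+1) ×ˢ B (n - (m+1)))) ∩
        (⋃ i ∈ Finset.range (m + 1), φ '' (A i ×ˢ B (n - i))) =
        φ '' (A m ×ˢ B (n - (m+1))) := by
      rw [Set.inter_iUnion₂]
      apply Set.Subset.antisymm
      · refine Set.iUnion₂_subset fun i hi => ?_
        have hi' : i ≤ m := by simpa [Nat.lt_succ_iff] using hi
        rw [← Set.image_inter hφ, Set.prod_inter_prod,
          Set.inter_eq_self_of_subset_right (hA (i := i) (j := m+1) (by omega)),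
          Set.inter_eq_self_of_subset_left (hB (i := n-(m+1)) (j := n-i) (by omega))]
        exact Set.image_mono (Set.prod_mono_left (hA (i := i) (j := m) hi'))
      · refine Set.subset_iUnion₂_of_subset m (by simp) ?_
        rw [← Set.image_inter hφ, Set.prod_inter_prod,
          Set.inter_eq_self_of_subset_right (hA (i := m) (j := m+1) (by omega)),
          Set.inter_eq_self_of_subset_left (hB (i := n-(m+1)) (j := n-m) (by omega))]
    have hie := Set.ncard_union_add_ncard_inter
      (φ '' (A (m+1) ×ˢ B (n - (m+1))))
      (⋃ i ∈ Finset.range (m + 1), φ '' (A i ×ˢ B (n - i)))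
      (hfin _ _) hDfin
    rw [hinter] at hie
    have hie' : ((( (φ '' (A (m+1) ×ˢ B (n - (m+1)))) ∪
        (⋃ i ∈ Finset.range (m + 1), φ '' (A i ×ˢ B (n - i)))).ncard : ℤ)) =
        ((φ '' (A (m+1) ×ˢ B (n - (m+1)))).ncard : ℤ) +
        ((⋃ i ∈ Finset.range (m + 1), φ '' (A i ×ˢ B (n - i))).ncard : ℤ) -
        ((φ '' (A m ×ˢ B (n - (m+1)))).ncard : ℤ) := by
      omega
    rw [hsplit, hie', ih, himg, himg,
      Finset.sum_range_succ (fun i => ((A i).ncard : ℤ) * ((B (n - i)).ncard : ℤ)) (m+1),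
      Finset.sum_range_succ (fun i => ((A i).ncard : ℤ) * ((B (n - 1 - i)).ncard : ℤ)) m]
    have h1 : n - (m+1) = n - 1 - m := by omega
    rw [h1]
    ring

open Classical in
lemma nSumset_freeSum_eq (d e : ℕ) (P : Set (Fin d → ℝ)) (Q : Set (Fin e → ℝ))
    (hstar : StarCond d e P Q) (n : ℕ) :
    nSumset (d + e) (freeSum d e P Q) n =
      ⋃ i ∈ Finset.range (n + 1),
        (fun p : (Fin d → ℝ) × (Fin e → ℝ) => muMap d e p.1 + nuMap d e p.2) ''
          (nSumset d P i ×ˢ nSumset e Q (n - i)) := by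
  apply Set.Subset.antisymm
  · rintro γ ⟨f, hf, rfl⟩
    have hf' : ∀ k, f k ∈ muMap d e '' latticePts d P ∪ nuMap d e '' latticePts e Q := by
      intro k; rw [← hstar]; exact hf k
    set p : Fin n → Prop := fun k => f k ∈ muMap d e '' latticePts d P with hp
    set S : Finset (Fin n) := Finset.univ.filter p with hS
    set T : Finset (Fin n) := Finset.univ.filter (fun k => ¬ p k) with hT
    set x : Fin n → (Fin d → ℝ) := fun k =>
      if h : f k ∈ muMap d e '' latticePts d P then h.choose else 0 with hx
    set y : Fin n → (Fin e → ℝ) := fun k =>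
      if h : f k ∈ muMap d e '' latticePts d P then 0
      else ((hf' k).resolve_left h).choose with hy
    have hxmem : ∀ k ∈ S, x k ∈ latticePts d P := by
      intro k hk
      have hk' : p k := (Finset.mem_filter.1 hk).2
      simp only [hx, dif_pos (show f k ∈ muMap d e '' latticePts d P from hk')]
      exact hk'.choose_spec.1
    have hymem : ∀ k ∈ T, y k ∈ latticePts e Q := by
      intro k hk
      have hk' : ¬ p k := (Finset.mem_filter.1 hk).2
      simp only [hy, dif_neg (show ¬ f k ∈ muMap d e '' latticePts d P from hk')]
      exact (((hf' k).resolve_left hk').choose_spec).1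
    have hsum : ∑ k, f k = muMap d e (∑ k ∈ S, x k) + nuMap d e (∑ k ∈ T, y k) := by
      rw [← Finset.sum_filter_add_sum_filter_not Finset.univ p f, ← hS, ← hT,
        ← muHom_apply, ← nuHom_apply, map_sum, map_sum]
      congr 1
      · refine Finset.sum_congr rfl fun k hk => ?_
        have hk' : p k := (Finset.mem_filter.1 hk).2
        rw [muHom_apply]
        simp only [hx, dif_pos (show f k ∈ muMap d e '' latticePts d P from hk')]
        exact hk'.choose_spec.2.symm
      · refine Finset.sum_congr rfl fun k hk => ?_
        have hk' : ¬ p k := (Finset.mem_filter.1 hk).2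
        rw [nuHom_apply]
        simp only [hy, dif_neg (show ¬ f k ∈ muMap d e '' latticePts d P from hk')]
        exact ((((hf' k).resolve_left hk').choose_spec).2).symm
    have hcard : S.card + T.card = n := by
      simpa using Finset.card_filter_add_card_filter_not (s := Finset.univ) (p := p)
    have hSle : S.card ≤ n := Nat.le.intro hcard
    have hTcard : T.card = n - S.card := by omega
    simp only [Set.mem_iUnion, Finset.mem_range]
    refine ⟨S.card, Nat.lt_succ_of_le hSle, ⟨(∑ k ∈ S, x k, ∑ k ∈ T, y k), ?_, hsum.symm⟩⟩
    refine Set.mem_prod.2 ⟨sum_mem_nSumset S x hxmem, ?_⟩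
    rw [← hTcard]
    exact sum_mem_nSumset T y hymem
  · intro γ hγ
    simp only [Set.mem_iUnion, Finset.mem_range] at hγ
    obtain ⟨i, hi, ⟨a, b⟩, hab, rfl⟩ := hγ
    obtain ⟨ha, hb⟩ := Set.mem_prod.1 hab
    obtain ⟨g, hg, rfl⟩ := ha
    obtain ⟨h, hh, rfl⟩ := hb
    have hin : i + (n - i) = n := by omega
    have key : ∀ k : Fin (i + (n - i)),
        Fin.append (fun j => muMap d e (g j)) (fun j => nuMap d e (h j)) k ∈
          muMap d e '' latticePts d P ∪ nuMap d e '' latticePts e Q := by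
      intro k
      refine Fin.addCases (fun j => ?_) (fun j => ?_) k
      · rw [Fin.append_left]; exact Or.inl ⟨g j, hg j, rfl⟩
      · rw [Fin.append_right]; exact Or.inr ⟨h j, hh j, rfl⟩
    have hsum2 : ∑ k : Fin n, Fin.append (fun j => muMap d e (g j))
          (fun j => nuMap d e (h j)) (Fin.cast hin.symm k) =
        muMap d e (∑ j, g j) + nuMap d e (∑ j, h j) := by
      rw [Fintype.sum_equiv (finCongr hin.symm)
        (fun k => Fin.append (fun j => muMap d e (g j)) (fun j => nuMap d e (h j))
          (Fin.cast hin.symm k))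
        (Fin.append (fun j => muMap d e (g j)) (fun j => nuMap d e (h j)))
        (fun k => rfl)]
      rw [Fin.sum_univ_add]
      simp only [Fin.append_left, Fin.append_right]
      rw [← muHom_apply, ← nuHom_apply, map_sum, map_sum]
      simp only [muHom_apply, nuHom_apply]
    refine ⟨fun k => Fin.append (fun j => muMap d e (g j)) (fun j => nuMap d e (h j))
      (Fin.cast hin.symm k), fun k => ?_, ?_⟩
    · rw [hstar]; exact key _
    · dsimp only
      rw [hsum2]


theorem hilbF_freeSum (d e : ℕ) (P : Set (Fin d → ℝ)) (Q : Set (Fin e → ℝ))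
    (hP : IsIntegralPolytope d P) (hQ : IsIntegralPolytope e Q)
    (hPdim : affineSpan ℝ P = ⊤) (hQdim : affineSpan ℝ Q = ⊤)
    (hP0 : (0 : Fin d → ℝ) ∈ P) (hQ0 : (0 : Fin e → ℝ) ∈ Q)
    (hstar : StarCond d e P Q) :
    ∀ n : ℕ, 1 ≤ n →
      (HilbF (d + e) (freeSum d e P Q) n : ℤ) =
        (∑ ij ∈ Finset.HasAntidiagonal.antidiagonal n, (HilbF d P ij.1 : ℤ) * (HilbF e Q ij.2 : ℤ)) -
        (∑ ij ∈ Finset.HasAntidiagonal.antidiagonal (n - 1), (HilbF d P ij.1 : ℤ) * (HilbF e Q ij.2 : ℤ)) := by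
  intro n hn
  have hPfin : (latticePts d P).Finite := by
    obtain ⟨S, -, rfl⟩ := hP
    exact finite_lattice_of_bounded (S.finite_toSet.isCompact_convexHull ℝ).isBounded
  have hQfin : (latticePts e Q).Finite := by
    obtain ⟨S, -, rfl⟩ := hQ
    exact finite_lattice_of_bounded (S.finite_toSet.isCompact_convexHull ℝ).isBounded
  rw [hilbF_cast, nSumset_freeSum_eq d e P Q hstar n,
    union_ncard (mu_add_nu_inj d e) (nSumset d P) (nSumset e Q)
      (fun h => nSumset_mono hP0 h) (fun h => nSumset_mono hQ0 h)
      (nSumset_finite hPfin) (nSumset_finite hQfin) n n,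
    Finset.Nat.sum_antidiagonal_eq_sum_range_succ_mk
      (fun ij => (HilbF d P ij.1 : ℤ) * (HilbF e Q ij.2 : ℤ)) n,
    Finset.Nat.sum_antidiagonal_eq_sum_range_succ_mk
      (fun ij => (HilbF d P ij.1 : ℤ) * (HilbF e Q ij.2 : ℤ)) (n - 1)]
  have h1 : (n - 1).succ = n := by omega
  rw [h1]
  simp only [hilbF_cast, Nat.succ_eq_add_one]
end

section
/- Let P ⊂ ℝ^d and Q ⊂ ℝ^e be integral convex polytopes of dimension d and e containing 0_d and 0_e, respectively. Suppose condition (★) holds and that the free sum P ⊕ Q possesses the integer decomposition property. Then δ(P ⊕ Q) = δ(P)·δ(Q), i.e., for every n ≥ 0, δ_n(P ⊕ Q) = Σ_{i+j=n} δ_i(P)·δ_j(Q), where δ(P ⊕ Q) is computed with respect to dimension d + e. -/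
open scoped BigOperators Pointwise

section helpers
variable {d e : ℕ} {P : Set (Fin d → ℝ)} {Q : Set (Fin e → ℝ)}

lemma latticePts_finite (S : Set (Fin d → ℝ)) (h : Bornology.IsBounded S) :
    (latticePts d S).Finite := by
  obtain ⟨C, hC⟩ := isBounded_iff_forall_norm_le.1 h
  have hsub : latticePts d S ⊆ (fun z : Fin d → ℤ => fun i => ((z i : ℤ) : ℝ)) ''
      {z : Fin d → ℤ | ∀ i, |z i| ≤ ⌈C⌉} := by
    rintro x ⟨hxS, hxl⟩
    choose z hz using hxl
    refine ⟨z, fun i => ?_, by funext i; exact (hz i).symm⟩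
    have h1 : |x i| ≤ C := le_trans (norm_le_pi_norm x i) (hC x hxS)
    have h2 : |(z i : ℝ)| ≤ (⌈C⌉ : ℝ) := by rw [← hz i]; exact h1.trans (Int.le_ceil C)
    rw [← Int.cast_abs] at h2; exact_mod_cast h2
  have hfin : ({z : Fin d → ℤ | ∀ i, |z i| ≤ ⌈C⌉}).Finite := by
    have : {z : Fin d → ℤ | ∀ i, |z i| ≤ ⌈C⌉} ⊆ Set.pi Set.univ (fun _ => Set.Icc (-⌈C⌉) ⌈C⌉) := by
      intro z hz i _; exact abs_le.1 (hz i)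
    exact (Set.Finite.pi (fun i => Set.finite_Icc _ _)).subset this
  exact (hfin.image _).subset hsub


lemma my_append_add (a c : Fin d → ℝ) (b b' : Fin e → ℝ) :
    Fin.append a b + Fin.append c b' = Fin.append (a + c) (b + b') := by
  funext i
  refine Fin.addCases (fun j => ?_) (fun j => ?_) i <;>
    simp [Fin.append_left, Fin.append_right]

lemma my_append_smul (r : ℝ) (a : Fin d → ℝ) (b : Fin e → ℝ) :
    r • Fin.append a b = Fin.append (r • a) (r • b) := by
  funext i
  refine Fin.addCases (fun j => ?_) (fun j => ?_) i <;>
    simp [Fin.append_left, Fin.append_right]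

lemma my_append_proj (x : Fin (d + e) → ℝ) :
    Fin.append (fun j => x (Fin.castAdd e j)) (fun j => x (Fin.natAdd d j)) = x := by
  funext i
  refine Fin.addCases (fun j => ?_) (fun j => ?_) i <;>
    simp [Fin.append_left, Fin.append_right]

/-- the pairing map -/
def gMap (d e : ℕ) (p : (Fin d → ℝ) × (Fin e → ℝ)) : Fin (d + e) → ℝ := Fin.append p.1 p.2

lemma gMap_injective : Function.Injective (gMap d e) := by
  rintro ⟨a, b⟩ ⟨c, b'⟩ h
  have h1 : a = c := by
    funext j; have := congrFun h (Fin.castAdd e j); simpa [gMap, Fin.append_left] using this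
  have h2 : b = b' := by
    funext j; have := congrFun h (Fin.natAdd d j); simpa [gMap, Fin.append_right] using this
  simp [h1, h2]

/-- dilation lattice points -/
def dilLat (d : ℕ) (P : Set (Fin d → ℝ)) (k : ℕ) : Set (Fin d → ℝ) :=
  latticePts d (((k : ℕ) : ℝ) • P)

lemma dilLat_zero (h0 : (0 : Fin d → ℝ) ∈ P) : dilLat d P 0 = {0} := by
  have hne : P.Nonempty := ⟨0, h0⟩
  ext x
  simp only [dilLat, latticePts, Nat.cast_zero, Set.zero_smul_set hne]
  constructor
  · rintro ⟨hx, -⟩; exact hx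
  · rintro rfl; exact ⟨rfl, fun i => ⟨0, by simp⟩⟩

lemma dilLat_finite (hP : IsIntegralPolytope d P) (k : ℕ) : (dilLat d P k).Finite := by
  obtain ⟨S, -, rfl⟩ := hP
  apply latticePts_finite
  exact (isBounded_convexHull.2 S.finite_toSet.isBounded).smul₀ _

lemma latticePts_finite' : True := trivial

lemma sum_mem_smul_of_convex (hP : Convex ℝ P) {ι : Type*} {s : Finset ι}
    (hs : s.Nonempty) (f : ι → (Fin d → ℝ)) (hf : ∀ i ∈ s, f i ∈ P) :
    ∑ i ∈ s, f i ∈ ((s.card : ℕ) : ℝ) • P := by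
  induction hs using Finset.Nonempty.cons_induction with
  | singleton i => simpa using hf i (by simp)
  | cons i s his hs ih =>
    rw [Finset.sum_cons, Finset.card_cons]
    have h1 : ((s.card + 1 : ℕ) : ℝ) • P = (1 : ℝ) • P + ((s.card : ℕ) : ℝ) • P := by
      rw [← hP.add_smul (by norm_num) (by positivity)]
      norm_num [add_comm]
    rw [h1]
    exact Set.add_mem_add (by simpa using hf i (by simp)) (ih (fun j hj => hf j (by simp [hj])))

lemma smul_nat_mono (hP : Convex ℝ P) (h0 : (0 : Fin d → ℝ) ∈ P) {k l : ℕ} (hkl : k ≤ l) :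
    ((k : ℕ) : ℝ) • P ⊆ ((l : ℕ) : ℝ) • P := by
  intro x hx
  have h1 : ((l : ℕ) : ℝ) • P = ((k : ℕ) : ℝ) • P + (((l - k : ℕ)) : ℝ) • P := by
    rw [← hP.add_smul (by positivity) (by positivity)]
    congr 1
    push_cast [hkl]
    ring
  rw [h1]
  have : (((l - k : ℕ)) : ℝ) • (0 : Fin d → ℝ) ∈ (((l - k : ℕ)) : ℝ) • P :=
    Set.smul_mem_smul_set h0
  simpa using Set.add_mem_add hx this

lemma dilLat_mono (hP : Convex ℝ P) (h0 : (0 : Fin d → ℝ) ∈ P) {k l : ℕ} (hkl : k ≤ l) :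
    dilLat d P k ⊆ dilLat d P l :=
  fun x hx => ⟨smul_nat_mono hP h0 hkl hx.1, hx.2⟩

/-- KEY decomposition -/
lemma lattice_decomp
    (hPc : Convex ℝ P) (hQc : Convex ℝ Q)
    (hP0 : (0 : Fin d → ℝ) ∈ P) (hQ0 : (0 : Fin e → ℝ) ∈ Q)
    (hstar : StarCond d e P Q)
    (hidp : HasIDP (d + e) (freeSum d e P Q))
    (n : ℕ) (hn : 1 ≤ n) :
    latticePts (d + e) (((n : ℕ) : ℝ) • freeSum d e P Q) =
      ⋃ k ∈ Finset.range (n + 1), gMap d e '' ((dilLat d P k) ×ˢ (dilLat e Q (n - k))) := by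
  have hFc : Convex ℝ (freeSum d e P Q) := convex_convexHull ℝ _
  have hmuF : ∀ x ∈ P, muMap d e x ∈ freeSum d e P Q := fun x hx =>
    subset_convexHull ℝ _ (Or.inl ⟨x, hx, rfl⟩)
  have hnuF : ∀ y ∈ Q, nuMap d e y ∈ freeSum d e P Q := fun y hy =>
    subset_convexHull ℝ _ (Or.inr ⟨y, hy, rfl⟩)
  have hF0 : (0 : Fin (d + e) → ℝ) ∈ freeSum d e P Q := by
    have := hmuF 0 hP0
    have h00 : muMap d e (0 : Fin d → ℝ) = 0 := by
      funext i
      refine Fin.addCases (fun j => ?_) (fun j => ?_) i <;>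
        simp [muMap, Fin.append_left, Fin.append_right]
    rwa [h00] at this
  apply Set.Subset.antisymm
  · -- forward
    rintro γ ⟨hγF, hγl⟩
    obtain ⟨f, hf, hγ⟩ := hidp n hn γ (by exact_mod_cast hγF) hγl
    classical
    have hf' : ∀ i, f i ∈ muMap d e '' latticePts d P ∪ nuMap d e '' latticePts e Q := by
      intro i; rw [← hstar]; exact hf i
    set s : Finset (Fin n) := Finset.univ.filter (fun i => f i ∈ muMap d e '' latticePts d P)
      with hs_def
    set α : Fin d → ℝ := fun j => γ (Fin.castAdd e j) with hα_def
    set β : Fin e → ℝ := fun j => γ (Fin.natAdd d j) with hβ_def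
    have hγab : γ = gMap d e (α, β) := (my_append_proj γ).symm
    -- α is the sum over s of the first components
    have hαsum : α = ∑ i ∈ s, (fun j => f i (Fin.castAdd e j)) := by
      have : α = ∑ i : Fin n, (fun j => f i (Fin.castAdd e j)) := by
        funext j; rw [hα_def]; simp only [hγ, Finset.sum_apply]
      rw [this, ← Finset.sum_filter_add_sum_filter_not Finset.univ
        (fun i => f i ∈ muMap d e '' latticePts d P)]
      have hz : ∀ i ∈ Finset.univ.filter
          (fun i => ¬ f i ∈ muMap d e '' latticePts d P),
          (fun j => f i (Fin.castAdd e j)) = (0 : Fin d → ℝ) := by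
        intro i hi
        simp only [Finset.mem_filter] at hi
        rcases hf' i with h | h
        · exact absurd h hi.2
        · obtain ⟨y, -, hy⟩ := h
          funext j; rw [← hy]; simp [nuMap, Fin.append_left]
      rw [Finset.sum_congr rfl hz]
      simp [hs_def]
    have hβsum : β = ∑ i ∈ sᶜ, (fun j => f i (Fin.natAdd d j)) := by
      have : β = ∑ i : Fin n, (fun j => f i (Fin.natAdd d j)) := by
        funext j; rw [hβ_def]; simp only [hγ, Finset.sum_apply]
      rw [this, ← Finset.sum_filter_add_sum_filter_not Finset.univ
        (fun i => f i ∈ muMap d e '' latticePts d P)]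
      have hz : ∀ i ∈ Finset.univ.filter
          (fun i => f i ∈ muMap d e '' latticePts d P),
          (fun j => f i (Fin.natAdd d j)) = (0 : Fin e → ℝ) := by
        intro i hi
        simp only [Finset.mem_filter] at hi
        obtain ⟨x, -, hx⟩ := hi.2
        funext j; rw [← hx]; simp [muMap, Fin.append_right]
      rw [Finset.sum_congr rfl hz]
      have : sᶜ = Finset.univ.filter (fun i => ¬ f i ∈ muMap d e '' latticePts d P) := by
        simp [hs_def, Finset.compl_filter]
      simp [this]
    have hαlat : IsLatticePt d α := fun j => hγl (Fin.castAdd e j)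
    have hβlat : IsLatticePt e β := fun j => hγl (Fin.natAdd d j)
    have hαmem : α ∈ dilLat d P s.card := by
      rcases s.eq_empty_or_nonempty with he | hne
      · have : α = 0 := by rw [hαsum, he]; simp
        rw [he]; simp only [Finset.card_empty]
        rw [dilLat_zero hP0]; simp [this]
      · refine ⟨?_, hαlat⟩
        rw [hαsum]
        refine sum_mem_smul_of_convex hPc hne _ (fun i hi => ?_)
        simp only [hs_def, Finset.mem_filter] at hi
        obtain ⟨x, hxP, hx⟩ := hi.2
        have : (fun j => f i (Fin.castAdd e j)) = x := by
          funext j; rw [← hx]; simp [muMap, Fin.append_left]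
        rw [this]; exact hxP.1
    have hβmem : β ∈ dilLat e Q sᶜ.card := by
      rcases sᶜ.eq_empty_or_nonempty with he | hne
      · have : β = 0 := by rw [hβsum, he]; simp
        rw [he]; simp only [Finset.card_empty]
        rw [dilLat_zero hQ0]; simp [this]
      · refine ⟨?_, hβlat⟩
        rw [hβsum]
        refine sum_mem_smul_of_convex hQc hne _ (fun i hi => ?_)
        have hi' : i ∉ s := by simpa using hi
        rcases hf' i with h | h
        · exact absurd (Finset.mem_filter.2 ⟨Finset.mem_univ i, h⟩) hi'
        · obtain ⟨y, hyQ, hy⟩ := h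
          have : (fun j => f i (Fin.natAdd d j)) = y := by
            funext j; rw [← hy]; simp [nuMap, Fin.append_right]
          rw [this]; exact hyQ.1
    have hcard : sᶜ.card = n - s.card := by
      rw [Finset.card_compl]; simp
    have hsle : s.card ≤ n := by
      have := Finset.card_le_card (Finset.subset_univ s); simpa using this
    refine Set.mem_biUnion (Finset.mem_range.2 (Nat.lt_succ_of_le hsle)) ?_
    exact ⟨(α, β), ⟨hαmem, by rwa [hcard] at hβmem⟩, hγab.symm⟩
  · -- backward
    rintro γ hγ
    simp only [Set.mem_iUnion] at hγ
    obtain ⟨k, hk, ⟨⟨α, β⟩, ⟨hα, hβ⟩, rfl⟩⟩ := hγ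
    dsimp only at hα hβ
    have hk' : k ≤ n := Nat.lt_succ_iff.1 (Finset.mem_range.1 hk)
    refine ⟨?_, ?_⟩
    swap
    · intro i
      refine Fin.addCases (fun j => ?_) (fun j => ?_) i
      · simpa [gMap, Fin.append_left] using hα.2 j
      · simpa [gMap, Fin.append_right] using hβ.2 j
    -- membership
    have hFne : (freeSum d e P Q).Nonempty := ⟨0, hF0⟩
    have hμ : muMap d e α ∈ ((k : ℕ) : ℝ) • freeSum d e P Q := by
      rcases Nat.eq_zero_or_pos k with rfl | hk0
      · have : α = 0 := by rw [dilLat_zero hP0] at hα; exact hα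
        simp only [Nat.cast_zero, Set.zero_smul_set hFne]
        rw [this]
        funext i
        refine Fin.addCases (fun j => ?_) (fun j => ?_) i <;>
          simp [muMap, Fin.append_left, Fin.append_right]
      · obtain ⟨p, hp, hpe⟩ := hα.1
        refine ⟨muMap d e p, hmuF p hp, ?_⟩
        show ((k : ℕ) : ℝ) • muMap d e p = muMap d e α
        rw [← hpe, muMap, muMap, my_append_smul]
        congr 1
        simp
    have hν : nuMap d e β ∈ (((n - k : ℕ)) : ℝ) • freeSum d e P Q := by
      rcases Nat.eq_zero_or_pos (n - k) with hnk | hnk0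
      · have : β = 0 := by rw [hnk, dilLat_zero hQ0] at hβ; exact hβ
        simp only [hnk, Nat.cast_zero, Set.zero_smul_set hFne]
        rw [this]
        funext i
        refine Fin.addCases (fun j => ?_) (fun j => ?_) i <;>
          simp [nuMap, Fin.append_left, Fin.append_right]
      · obtain ⟨q, hq, hqe⟩ := hβ.1
        refine ⟨nuMap d e q, hnuF q hq, ?_⟩
        show (((n - k : ℕ)) : ℝ) • nuMap d e q = nuMap d e β
        rw [← hqe, nuMap, nuMap, my_append_smul]
        congr 1
        simp
    have hsplit : ((n : ℕ) : ℝ) • freeSum d e P Q =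
        ((k : ℕ) : ℝ) • freeSum d e P Q + (((n - k : ℕ)) : ℝ) • freeSum d e P Q := by
      rw [← hFc.add_smul (by positivity) (by positivity)]
      congr 1
      push_cast [hk']
      ring
    rw [hsplit]
    have := Set.add_mem_add hμ hν
    have heq : muMap d e α + nuMap d e β = gMap d e (α, β) := by
      rw [muMap, nuMap, my_append_add]
      simp [gMap]
    rwa [heq] at this



lemma my_ncard_prod {X Y : Type*} (A : Set X) (B : Set Y) :
    (A ×ˢ B).ncard = A.ncard * B.ncard := by
  rw [← Nat.card_coe_set_eq, ← Nat.card_coe_set_eq, ← Nat.card_coe_set_eq,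
    Nat.card_congr (Equiv.Set.prod A B), Nat.card_prod]

lemma my_ncard_biUnion {X ι : Type*} [DecidableEq ι] (s : Finset ι) (f : ι → Set X)
    (hfin : ∀ i ∈ s, (f i).Finite)
    (hdisj : ∀ i ∈ s, ∀ j ∈ s, i ≠ j → Disjoint (f i) (f j)) :
    (⋃ i ∈ s, f i).ncard = ∑ i ∈ s, (f i).ncard := by
  induction s using Finset.induction with
  | empty => simp
  | @insert a s ha ih =>
    rw [Finset.set_biUnion_insert, Finset.sum_insert ha]
    have hfin2 : (⋃ x ∈ s, f x).Finite := by
      apply Set.Finite.biUnion s.finite_toSet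
      intro i hi
      exact hfin i (by simp at hi; simp [hi])
    have hd : Disjoint (f a) (⋃ x ∈ s, f x) := by
      rw [Set.disjoint_iUnion_right]
      intro i
      rw [Set.disjoint_iUnion_right]
      intro hi
      exact hdisj a (by simp) i (by simp [hi]) (fun h => ha (h ▸ hi))
    rw [Set.ncard_union_eq hd (hfin a (by simp)) hfin2]
    rw [ih (fun i hi => hfin i (by simp [hi]))
      (fun i hi j hj hij => hdisj i (by simp [hi]) j (by simp [hj]) hij)]

/-- disjointified pieces -/
def dilNew (d : ℕ) (P : Set (Fin d → ℝ)) (k : ℕ) : Set (Fin d → ℝ) :=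
  if k = 0 then dilLat d P 0 else dilLat d P k \ dilLat d P (k - 1)

lemma dilNew_subset (k : ℕ) : dilNew d P k ⊆ dilLat d P k := by
  unfold dilNew; split
  · next h => subst h; exact le_refl _
  · exact Set.diff_subset

lemma dilNew_disjoint (hPc : Convex ℝ P) (hP0 : (0 : Fin d → ℝ) ∈ P) {k l : ℕ} (hkl : k < l) :
    Disjoint (dilNew d P k) (dilNew d P l) := by
  have hl : l ≠ 0 := by omega
  rw [Set.disjoint_left]
  intro x hxk hxl
  have h1 : x ∈ dilLat d P (l - 1) :=
    dilLat_mono hPc hP0 (by omega) (dilNew_subset k hxk)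
  rw [dilNew, if_neg hl] at hxl
  exact hxl.2 h1

lemma decomp_disjointified (hPc : Convex ℝ P) (hQc : Convex ℝ Q)
    (hP0 : (0 : Fin d → ℝ) ∈ P) (hQ0 : (0 : Fin e → ℝ) ∈ Q) (n : ℕ) :
    ⋃ k ∈ Finset.range (n + 1), gMap d e '' ((dilLat d P k) ×ˢ (dilLat e Q (n - k))) =
      ⋃ k ∈ Finset.range (n + 1), gMap d e '' ((dilNew d P k) ×ˢ (dilLat e Q (n - k))) := by
  apply Set.Subset.antisymm
  · intro x hx
    simp only [Set.mem_iUnion] at hx ⊢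
    obtain ⟨k, hk, ⟨⟨α, β⟩, ⟨hα, hβ⟩, rfl⟩⟩ := hx
    dsimp only at hα hβ
    classical
    have hex : ∃ m, α ∈ dilLat d P m := ⟨k, hα⟩
    set m := Nat.find hex with hm_def
    have hm : α ∈ dilLat d P m := Nat.find_spec hex
    have hmk : m ≤ k := Nat.find_min' hex hα
    have hknk : k ≤ n := by
      have := Finset.mem_range.1 hk; omega
    refine ⟨m, Finset.mem_range.2 (by omega), ⟨(α, β), ⟨?_, ?_⟩, rfl⟩⟩
    · rcases Nat.eq_zero_or_pos m with hm0 | hm0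
      · rw [dilNew, if_pos hm0, ← hm0]; exact hm
      · rw [dilNew, if_neg (by omega)]
        exact ⟨hm, Nat.find_min hex (by omega)⟩
    · exact dilLat_mono hQc hQ0 (Nat.sub_le_sub_left hmk n) hβ
  · refine Set.iUnion₂_mono fun k _ => ?_
    exact Set.image_mono (Set.prod_mono (dilNew_subset k) (le_refl _))

lemma counting (hP : IsIntegralPolytope d P) (hQ : IsIntegralPolytope e Q)
    (hPc : Convex ℝ P) (hQc : Convex ℝ Q)
    (hP0 : (0 : Fin d → ℝ) ∈ P) (hQ0 : (0 : Fin e → ℝ) ∈ Q)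
    (hstar : StarCond d e P Q)
    (hidp : HasIDP (d + e) (freeSum d e P Q))
    (n : ℕ) (hn : 1 ≤ n) :
    ((latticePts (d + e) (((n : ℕ) : ℝ) • freeSum d e P Q)).ncard : ℤ) =
      ∑ k ∈ Finset.range (n + 1),
        (if k = 0 then 1 else ((dilLat d P k).ncard : ℤ) - ((dilLat d P (k - 1)).ncard : ℤ)) *
          ((dilLat e Q (n - k)).ncard : ℤ) := by
  classical
  have hfinP : ∀ k, (dilLat d P k).Finite := dilLat_finite hP
  have hfinQ : ∀ k, (dilLat e Q k).Finite := dilLat_finite hQ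
  have hfinNew : ∀ k, (dilNew d P k).Finite := fun k => (hfinP k).subset (dilNew_subset k)
  rw [lattice_decomp hPc hQc hP0 hQ0 hstar hidp n hn, decomp_disjointified hPc hQc hP0 hQ0 n]
  rw [my_ncard_biUnion _ _
    (fun k _ => ((hfinNew k).prod (hfinQ (n - k))).image _)
    (fun k _ l _ hkl => ?_)]
  · push_cast
    apply Finset.sum_congr rfl
    intro k hk
    rw [Set.ncard_image_of_injective _ gMap_injective, my_ncard_prod]
    push_cast
    congr 1
    rcases Nat.eq_zero_or_pos k with rfl | hk0
    · rw [if_pos rfl, dilNew, if_pos rfl, dilLat_zero hP0, Set.ncard_singleton]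
      norm_num
    · rw [if_neg (by omega), dilNew, if_neg (by omega),
        Set.ncard_diff (dilLat_mono hPc hP0 (by omega : k - 1 ≤ k)) (hfinP (k-1))]
      rw [Nat.cast_sub (Set.ncard_le_ncard (dilLat_mono hPc hP0 (by omega : k - 1 ≤ k)) (hfinP k))]
  · -- disjointness of images
    rw [Set.disjoint_left]
    rintro x ⟨⟨α, β⟩, ⟨hα, hβ⟩, rfl⟩ ⟨⟨α', β'⟩, ⟨hα', hβ'⟩, hx⟩
    obtain ⟨h1, h2⟩ := Prod.mk.injEq .. ▸ (gMap_injective hx)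
    dsimp only at hα hβ hα' hβ'
    rcases Nat.lt_or_ge k l with h | h
    · exact Set.disjoint_left.1 (dilNew_disjoint hPc hP0 h) hα (h1 ▸ hα')
    · have h' : l < k := by omega
      exact Set.disjoint_left.1 (dilNew_disjoint hPc hP0 h') (h1 ▸ hα') hα

end helpers

section ps
open PowerSeries

lemma coeff_one_sub_X_pow (m j : ℕ) :
    PowerSeries.coeff j ((1 - PowerSeries.X) ^ m) = (-1) ^ j * ((m.choose j : ℕ) : ℤ) := by
  induction m generalizing j with
  | zero =>
    cases j with
    | zero => simp
    | succ j => simp [Nat.choose_eq_zero_of_lt (Nat.succ_pos j), PowerSeries.coeff_one]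
  | succ m ih =>
    have h : (1 - PowerSeries.X : PowerSeries ℤ) ^ (m + 1)
        = (1 - PowerSeries.X) ^ m - PowerSeries.X * (1 - PowerSeries.X) ^ m := by ring
    rw [h, map_sub, ih]
    cases j with
    | zero => simp [PowerSeries.coeff_zero_X_mul]
    | succ j =>
      rw [PowerSeries.coeff_succ_X_mul, ih, Nat.choose_succ_succ]
      push_cast
      ring

lemma coeff_one_sub_mul_zero (φ : PowerSeries ℤ) :
    PowerSeries.coeff 0 ((1 - PowerSeries.X) * φ) = PowerSeries.coeff 0 φ := by
  rw [sub_mul, one_mul, map_sub, PowerSeries.coeff_zero_X_mul, sub_zero]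

lemma coeff_one_sub_mul_succ (φ : PowerSeries ℤ) (k : ℕ) :
    PowerSeries.coeff (k + 1) ((1 - PowerSeries.X) * φ) =
      PowerSeries.coeff (k + 1) φ - PowerSeries.coeff k φ := by
  rw [sub_mul, one_mul, map_sub, PowerSeries.coeff_succ_X_mul]
end ps

section final
variable {d e : ℕ} {P : Set (Fin d → ℝ)} {Q : Set (Fin e → ℝ)}

lemma EhrI_eq_ncard (hP0 : (0 : Fin d → ℝ) ∈ P) (n : ℕ) :
    EhrI d P n = ((dilLat d P n).ncard : ℤ) := by
  cases n with
  | zero => rw [dilLat_zero hP0, Set.ncard_singleton]; rfl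
  | succ n => rfl

noncomputable def ehrSeries (d : ℕ) (P : Set (Fin d → ℝ)) : PowerSeries ℤ :=
  PowerSeries.mk (EhrI d P)

lemma deltaCoeff_eq_coeff (n : ℕ) :
    deltaCoeff d P n =
      PowerSeries.coeff n ((1 - PowerSeries.X) ^ (d + 1) * ehrSeries d P) := by
  rw [PowerSeries.coeff_mul, Finset.Nat.sum_antidiagonal_eq_sum_range_succ_mk]
  unfold deltaCoeff
  refine Finset.sum_congr rfl fun j hj => ?_
  rw [coeff_one_sub_X_pow, ehrSeries, PowerSeries.coeff_mk]

lemma convex_of_integral (hP : IsIntegralPolytope d P) : Convex ℝ P := by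
  obtain ⟨S, -, rfl⟩ := hP
  exact convex_convexHull ℝ _

lemma ehr_freeSum (hP : IsIntegralPolytope d P) (hQ : IsIntegralPolytope e Q)
    (hP0 : (0 : Fin d → ℝ) ∈ P) (hQ0 : (0 : Fin e → ℝ) ∈ Q)
    (hstar : StarCond d e P Q)
    (hidp : HasIDP (d + e) (freeSum d e P Q)) :
    ehrSeries (d + e) (freeSum d e P Q) =
      (1 - PowerSeries.X) * ehrSeries d P * ehrSeries e Q := by
  have hPc := convex_of_integral hP
  have hQc := convex_of_integral hQ
  ext n
  rw [mul_assoc, ← mul_assoc, PowerSeries.coeff_mul,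
    Finset.Nat.sum_antidiagonal_eq_sum_range_succ_mk]
  have hc : ∀ k : ℕ, PowerSeries.coeff k ((1 - PowerSeries.X) * ehrSeries d P) =
      (if k = 0 then 1 else ((dilLat d P k).ncard : ℤ) - ((dilLat d P (k - 1)).ncard : ℤ)) := by
    intro k
    cases k with
    | zero =>
      rw [coeff_one_sub_mul_zero, if_pos rfl, ehrSeries, PowerSeries.coeff_mk]
      rfl
    | succ k =>
      rw [coeff_one_sub_mul_succ, if_neg (Nat.succ_ne_zero k), ehrSeries,
        PowerSeries.coeff_mk, PowerSeries.coeff_mk,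
        EhrI_eq_ncard hP0, EhrI_eq_ncard hP0]
      norm_num
  cases n with
  | zero =>
    simp [ehrSeries, EhrI]
  | succ n =>
    have hl : PowerSeries.coeff (n + 1) (ehrSeries (d + e) (freeSum d e P Q)) =
        ((latticePts (d + e) (((n + 1 : ℕ) : ℝ) • freeSum d e P Q)).ncard : ℤ) := by
      rw [ehrSeries, PowerSeries.coeff_mk]; rfl
    rw [hl, counting hP hQ hPc hQc hP0 hQ0 hstar hidp (n + 1) (Nat.le_add_left 1 n)]
    refine Finset.sum_congr rfl fun k hk => ?_
    rw [hc k, ehrSeries, PowerSeries.coeff_mk, EhrI_eq_ncard hQ0]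

end final

theorem deltaCoeff_freeSum (d e : ℕ) (P : Set (Fin d → ℝ)) (Q : Set (Fin e → ℝ))
    (hP : IsIntegralPolytope d P) (hQ : IsIntegralPolytope e Q)
    (hPdim : affineSpan ℝ P = ⊤) (hQdim : affineSpan ℝ Q = ⊤)
    (hP0 : (0 : Fin d → ℝ) ∈ P) (hQ0 : (0 : Fin e → ℝ) ∈ Q)
    (hstar : StarCond d e P Q)
    (hidp : HasIDP (d + e) (freeSum d e P Q)) :
    ∀ n : ℕ, deltaCoeff (d + e) (freeSum d e P Q) n =
      ∑ ij ∈ Finset.HasAntidiagonal.antidiagonal n, deltaCoeff d P ij.1 * deltaCoeff e Q ij.2 := by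
  have key := ehr_freeSum hP hQ hP0 hQ0 hstar hidp
  intro n
  rw [deltaCoeff_eq_coeff, key]
  have hring : (1 - PowerSeries.X : PowerSeries ℤ) ^ (d + e + 1) *
      ((1 - PowerSeries.X) * ehrSeries d P * ehrSeries e Q) =
      ((1 - PowerSeries.X) ^ (d + 1) * ehrSeries d P) *
        ((1 - PowerSeries.X) ^ (e + 1) * ehrSeries e Q) := by
    ring
  rw [hring, PowerSeries.coeff_mul]
  refine Finset.sum_congr rfl fun ij hij => ?_
  rw [deltaCoeff_eq_coeff, deltaCoeff_eq_coeff]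
end

section
/- Let P ⊂ ℝ³ be the convex hull of the points (0,0,0), (1,1,0), (1,0,1), (0,1,1) and (1,0,0). Then P possesses the integer decomposition property. -/
open scoped BigOperators Pointwise

def Vset : Set (Fin 3 → ℝ) := {![0,0,0], ![1,1,0], ![1,0,1], ![0,1,1], ![1,0,0]}

lemma key_ind : ∀ (n : ℕ) (a b c : ℤ), 0 ≤ b → 0 ≤ c → c ≤ a + b → b ≤ a + c →
    a ≤ n → a + b + c ≤ 2 * n →
    ∃ f : Fin n → (Fin 3 → ℝ), (∀ i, f i ∈ Vset) ∧
      (∑ i, f i) = ![(a : ℝ), (b : ℝ), (c : ℝ)] := by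
  intro n
  induction n with
  | zero =>
    intro a b c h1 h2 h3 h4 h5 h6
    have ha : a = 0 := by omega
    have hb : b = 0 := by omega
    have hc : c = 0 := by omega
    subst ha hb hc
    refine ⟨fun i => ![0,0,0], fun i => i.elim0, ?_⟩
    simp
    funext i
    fin_cases i <;> simp
  | succ n ih =>
    intro a b c h1 h2 h3 h4 h5 h6
    have hcase : (0 ≤ b ∧ 0 ≤ c ∧ c ≤ a + b ∧ b ≤ a + c ∧ a ≤ n ∧ a + b + c ≤ 2 * n) ∨
        (0 ≤ b - 1 ∧ 0 ≤ c ∧ c ≤ (a-1) + (b-1) ∧ (b-1) ≤ (a-1) + c ∧ a - 1 ≤ n ∧ (a-1) + (b-1) + c ≤ 2 * n) ∨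
        (0 ≤ b ∧ 0 ≤ c - 1 ∧ (c-1) ≤ (a-1) + b ∧ b ≤ (a-1) + (c-1) ∧ a - 1 ≤ n ∧ (a-1) + b + (c-1) ≤ 2 * n) ∨
        (0 ≤ b - 1 ∧ 0 ≤ c - 1 ∧ (c-1) ≤ a + (b-1) ∧ (b-1) ≤ a + (c-1) ∧ a ≤ n ∧ a + (b-1) + (c-1) ≤ 2 * n) ∨
        (0 ≤ b ∧ 0 ≤ c ∧ c ≤ (a-1) + b ∧ b ≤ (a-1) + c ∧ a - 1 ≤ n ∧ (a-1) + b + c ≤ 2 * n) := by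
      omega
    rcases hcase with h | h | h | h | h
    · obtain ⟨f, hf1, hf2⟩ := ih a b c h.1 h.2.1 h.2.2.1 h.2.2.2.1 h.2.2.2.2.1 h.2.2.2.2.2
      refine ⟨Fin.cons ![0,0,0] f, ?_, ?_⟩
      · intro i
        refine Fin.cases ?_ ?_ i
        · left; rfl
        · intro j; simpa using hf1 j
      · rw [Fin.sum_cons, hf2]
        funext i; fin_cases i <;> simp
    · obtain ⟨f, hf1, hf2⟩ := ih (a-1) (b-1) c h.1 h.2.1 h.2.2.1 h.2.2.2.1 h.2.2.2.2.1 h.2.2.2.2.2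
      refine ⟨Fin.cons ![1,1,0] f, ?_, ?_⟩
      · intro i
        refine Fin.cases ?_ ?_ i
        · right; left; rfl
        · intro j; simpa using hf1 j
      · rw [Fin.sum_cons, hf2]
        funext i; fin_cases i <;> simp
    · obtain ⟨f, hf1, hf2⟩ := ih (a-1) b (c-1) h.1 h.2.1 h.2.2.1 h.2.2.2.1 h.2.2.2.2.1 h.2.2.2.2.2
      refine ⟨Fin.cons ![1,0,1] f, ?_, ?_⟩
      · intro i
        refine Fin.cases ?_ ?_ i
        · right; right; left; rfl
        · intro j; simpa using hf1 j
      · rw [Fin.sum_cons, hf2]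
        funext i; fin_cases i <;> simp
    · obtain ⟨f, hf1, hf2⟩ := ih a (b-1) (c-1) h.1 h.2.1 h.2.2.1 h.2.2.2.1 h.2.2.2.2.1 h.2.2.2.2.2
      refine ⟨Fin.cons ![0,1,1] f, ?_, ?_⟩
      · intro i
        refine Fin.cases ?_ ?_ i
        · right; right; right; left; rfl
        · intro j; simpa using hf1 j
      · rw [Fin.sum_cons, hf2]
        funext i; fin_cases i <;> simp
    · obtain ⟨f, hf1, hf2⟩ := ih (a-1) b c h.1 h.2.1 h.2.2.1 h.2.2.2.1 h.2.2.2.2.1 h.2.2.2.2.2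
      refine ⟨Fin.cons ![1,0,0] f, ?_, ?_⟩
      · intro i
        refine Fin.cases ?_ ?_ i
        · right; right; right; right; rfl
        · intro j; simpa using hf1 j
      · rw [Fin.sum_cons, hf2]
        funext i; fin_cases i <;> simp
lemma hull_le (c0 c1 c2 r : ℝ) (S : Set (Fin 3 → ℝ))
    (hS : ∀ v ∈ S, c0 * v 0 + c1 * v 1 + c2 * v 2 ≤ r) :
    ∀ x ∈ convexHull ℝ S, c0 * x 0 + c1 * x 1 + c2 * x 2 ≤ r := by
  have hlin : IsLinearMap ℝ (fun x : Fin 3 → ℝ => c0 * x 0 + c1 * x 1 + c2 * x 2) := by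
    constructor
    · intro x y; simp [Pi.add_apply]; ring
    · intro s x; simp [Pi.smul_apply, smul_eq_mul]; ring
  have hconv : Convex ℝ {x : Fin 3 → ℝ | c0 * x 0 + c1 * x 1 + c2 * x 2 ≤ r} :=
    convex_halfSpace_le hlin r
  intro x hx
  exact convexHull_min hS hconv hx

lemma lat01 (v : Fin 3 → ℝ) (h : ∀ i, v i = 0 ∨ v i = 1) : IsLatticePt 3 v := by
  intro i
  rcases h i with h | h
  · exact ⟨0, by simp [h]⟩
  · exact ⟨1, by simp [h]⟩

lemma vset_lattice : ∀ v ∈ Vset, IsLatticePt 3 v := by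
  rintro v (rfl | rfl | rfl | rfl | rfl) <;> apply lat01 <;> intro i <;> fin_cases i <;> norm_num

theorem example_hasIDP (P : Set (Fin 3 → ℝ))
    (hP : P = convexHull ℝ
      ({![0,0,0], ![1,1,0], ![1,0,1], ![0,1,1], ![1,0,0]} : Set (Fin 3 → ℝ))) :
    HasIDP 3 P := by
  set S : Set (Fin 3 → ℝ) := {![0,0,0], ![1,1,0], ![1,0,1], ![0,1,1], ![1,0,0]} with hS
  have hVS : Vset = S := rfl
  intro n hn γ hγ hγint
  obtain ⟨x, hx, rfl⟩ := hγ
  choose z hz using hγint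
  have hxhull : x ∈ convexHull ℝ S := by rw [← hP]; exact hx
  -- the six inequalities on x
  have hb0 : 0 ≤ x 1 := by
    have := hull_le 0 (-1) 0 0 S ?_ x hxhull
    · linarith
    · rintro v (rfl | rfl | rfl | rfl | rfl) <;> norm_num
  have hc0 : 0 ≤ x 2 := by
    have := hull_le 0 0 (-1) 0 S ?_ x hxhull
    · linarith
    · rintro v (rfl | rfl | rfl | rfl | rfl) <;> norm_num [Matrix.cons_val_two, Matrix.tail_cons, Matrix.head_cons]
  have hcab : x 2 ≤ x 0 + x 1 := by
    have := hull_le (-1) (-1) 1 0 S ?_ x hxhull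
    · linarith
    · rintro v (rfl | rfl | rfl | rfl | rfl) <;> norm_num [Matrix.cons_val_two, Matrix.tail_cons, Matrix.head_cons]
  have hbac : x 1 ≤ x 0 + x 2 := by
    have := hull_le (-1) 1 (-1) 0 S ?_ x hxhull
    · linarith
    · rintro v (rfl | rfl | rfl | rfl | rfl) <;> norm_num [Matrix.cons_val_two, Matrix.tail_cons, Matrix.head_cons]
  have ha1 : x 0 ≤ 1 := by
    have := hull_le 1 0 0 1 S ?_ x hxhull
    · linarith
    · rintro v (rfl | rfl | rfl | rfl | rfl) <;> norm_num
  have hsum : x 0 + x 1 + x 2 ≤ 2 := by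
    have := hull_le 1 1 1 2 S ?_ x hxhull
    · linarith
    · rintro v (rfl | rfl | rfl | rfl | rfl) <;> norm_num [Matrix.cons_val_two, Matrix.tail_cons, Matrix.head_cons]
  have hnn : (0 : ℝ) ≤ (n : ℝ) := Nat.cast_nonneg n
  have hγi : ∀ i, ((z i : ℝ)) = (n : ℝ) * x i := by
    intro i
    rw [← hz i]
    simp [Pi.smul_apply, smul_eq_mul]
  -- integer inequalities
  have iz1 : 0 ≤ z 1 := by
    have : (0 : ℝ) ≤ (z 1 : ℝ) := by rw [hγi 1]; positivity
    exact_mod_cast this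
  have iz2 : 0 ≤ z 2 := by
    have : (0 : ℝ) ≤ (z 2 : ℝ) := by rw [hγi 2]; positivity
    exact_mod_cast this
  have icab : z 2 ≤ z 0 + z 1 := by
    have : (z 2 : ℝ) ≤ (z 0 : ℝ) + (z 1 : ℝ) := by
      rw [hγi 0, hγi 1, hγi 2]; nlinarith
    exact_mod_cast this
  have ibac : z 1 ≤ z 0 + z 2 := by
    have : (z 1 : ℝ) ≤ (z 0 : ℝ) + (z 2 : ℝ) := by
      rw [hγi 0, hγi 1, hγi 2]; nlinarith
    exact_mod_cast this
  have ia : z 0 ≤ (n : ℤ) := by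
    have : (z 0 : ℝ) ≤ (n : ℝ) := by rw [hγi 0]; nlinarith
    exact_mod_cast this
  have isum : z 0 + z 1 + z 2 ≤ 2 * (n : ℤ) := by
    have : (z 0 : ℝ) + (z 1 : ℝ) + (z 2 : ℝ) ≤ 2 * (n : ℝ) := by
      rw [hγi 0, hγi 1, hγi 2]; nlinarith
    exact_mod_cast this
  obtain ⟨f, hf1, hf2⟩ := key_ind n (z 0) (z 1) (z 2) iz1 iz2 icab ibac ia isum
  refine ⟨f, ?_, ?_⟩
  · intro i
    refine ⟨?_, vset_lattice _ (hf1 i)⟩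
    rw [hP]
    exact subset_convexHull ℝ S (by rw [← hVS]; exact hf1 i)
  · rw [hf2]
    funext i
    fin_cases i <;> simp [← hz]
end

section
/- Let P ⊂ ℝ³ be the convex hull of the points (0,0,0), (1,1,0), (1,0,1), (0,1,1) and (1,0,0). Then the free sum P ⊕ P ⊂ ℝ⁶ does NOT possess the integer decomposition property: there exist an integer n ≥ 1 and a point γ ∈ n(P ⊕ P) ∩ ℤ⁶ that cannot be written as a sum of n lattice points of P ⊕ P. -/
open scoped BigOperators Pointwise

section Aux

private lemma mu_apply' (x : Fin 3 → ℝ) : muMap 3 3 x = ![x 0, x 1, x 2, 0, 0, 0] := by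
  funext i; fin_cases i <;> rfl

private lemma nu_apply' (x : Fin 3 → ℝ) : nuMap 3 3 x = ![0, 0, 0, x 0, x 1, x 2] := by
  funext i; fin_cases i <;> rfl

private lemma mu0 (x : Fin 3 → ℝ) : muMap 3 3 x 0 = x 0 := rfl
private lemma mu1 (x : Fin 3 → ℝ) : muMap 3 3 x 1 = x 1 := rfl
private lemma mu2 (x : Fin 3 → ℝ) : muMap 3 3 x 2 = x 2 := rfl
private lemma mu3 (x : Fin 3 → ℝ) : muMap 3 3 x 3 = 0 := rfl
private lemma mu4 (x : Fin 3 → ℝ) : muMap 3 3 x 4 = 0 := rfl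
private lemma mu5 (x : Fin 3 → ℝ) : muMap 3 3 x 5 = 0 := rfl
private lemma nu0 (x : Fin 3 → ℝ) : nuMap 3 3 x 0 = 0 := rfl
private lemma nu1 (x : Fin 3 → ℝ) : nuMap 3 3 x 1 = 0 := rfl
private lemma nu2 (x : Fin 3 → ℝ) : nuMap 3 3 x 2 = 0 := rfl
private lemma nu3 (x : Fin 3 → ℝ) : nuMap 3 3 x 3 = x 0 := rfl
private lemma nu4 (x : Fin 3 → ℝ) : nuMap 3 3 x 4 = x 1 := rfl
private lemma nu5 (x : Fin 3 → ℝ) : nuMap 3 3 x 5 = x 2 := rfl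


private lemma cvx_nn {a b p P : ℝ} (ha : 0 ≤ a) (hb : 0 ≤ b)
    (h1 : 0 ≤ p) (h2 : 0 ≤ P) : 0 ≤ a * p + b * P :=
  add_nonneg (mul_nonneg ha h1) (mul_nonneg hb h2)

private lemma cvx_le {a b p P r : ℝ} (ha : 0 ≤ a) (hb : 0 ≤ b) (hab : a + b = 1)
    (h1 : p ≤ r) (h2 : P ≤ r) : a * p + b * P ≤ r := by
  have t1 := mul_le_mul_of_nonneg_left h1 ha
  have t2 := mul_le_mul_of_nonneg_left h2 hb
  have hr : a * r + b * r = r := by rw [← add_mul, hab, one_mul]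
  linarith

private lemma cvx_le2 {a b p q P Q r : ℝ} (ha : 0 ≤ a) (hb : 0 ≤ b) (hab : a + b = 1)
    (h1 : p + q ≤ r) (h2 : P + Q ≤ r) : a * p + b * P + (a * q + b * Q) ≤ r := by
  have t1 := mul_le_mul_of_nonneg_left h1 ha
  have t2 := mul_le_mul_of_nonneg_left h2 hb
  have hr : a * r + b * r = r := by rw [← add_mul, hab, one_mul]
  ring_nf at t1 t2 ⊢
  linarith

private lemma cvx_le3 {a b p q s P Q S r : ℝ} (ha : 0 ≤ a) (hb : 0 ≤ b) (hab : a + b = 1)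
    (h1 : p + q + s ≤ r) (h2 : P + Q + S ≤ r) :
    a * p + b * P + (a * q + b * Q) + (a * s + b * S) ≤ r := by
  have t1 := mul_le_mul_of_nonneg_left h1 ha
  have t2 := mul_le_mul_of_nonneg_left h2 hb
  have hr : a * r + b * r = r := by rw [← add_mul, hab, one_mul]
  ring_nf at t1 t2 ⊢
  linarith

/-- bounds valid on P -/
private lemma Pbounds (P : Set (Fin 3 → ℝ))
    (hP : P = convexHull ℝ
      ({![0,0,0], ![1,1,0], ![1,0,1], ![0,1,1], ![1,0,0]} : Set (Fin 3 → ℝ))) :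
    ∀ a ∈ P, (0 ≤ a 0 ∧ 0 ≤ a 1 ∧ 0 ≤ a 2) ∧ (a 0 ≤ 1 ∧ a 1 ≤ 1 ∧ a 2 ≤ 1) ∧
      a 0 + a 1 + a 2 ≤ 2 := by
  set T : Set (Fin 3 → ℝ) :=
    {a | (0 ≤ a 0 ∧ 0 ≤ a 1 ∧ 0 ≤ a 2) ∧ (a 0 ≤ 1 ∧ a 1 ≤ 1 ∧ a 2 ≤ 1) ∧
      a 0 + a 1 + a 2 ≤ 2} with hT
  have hconvT : Convex ℝ T := by
    intro x hx y hy a b ha hb hab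
    simp only [hT, Set.mem_setOf_eq, Pi.add_apply, Pi.smul_apply, smul_eq_mul] at *
    obtain ⟨⟨x0,x1,x2⟩,⟨x3,x4,x5⟩,x6⟩ := hx
    obtain ⟨⟨y0,y1,y2⟩,⟨y3,y4,y5⟩,y6⟩ := hy
    exact ⟨⟨cvx_nn ha hb x0 y0, cvx_nn ha hb x1 y1, cvx_nn ha hb x2 y2⟩,
      ⟨cvx_le ha hb hab x3 y3, cvx_le ha hb hab x4 y4, cvx_le ha hb hab x5 y5⟩,
      cvx_le3 ha hb hab x6 y6⟩
  have hsub : ({![0,0,0], ![1,1,0], ![1,0,1], ![0,1,1], ![1,0,0]} : Set (Fin 3 → ℝ)) ⊆ T := by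
    intro a ha
    simp only [Set.mem_insert_iff, Set.mem_singleton_iff] at ha
    rcases ha with rfl | rfl | rfl | rfl | rfl <;>
      simp only [hT, Set.mem_setOf_eq] <;> norm_num [Matrix.cons_val_two, Matrix.tail_cons, Matrix.head_cons]
  intro a haP
  have : a ∈ T := by
    rw [hP] at haP
    exact convexHull_min hsub hconvT haP
  exact this

/-- the valid-inequality region for the free sum -/
private def Ubox : Set (Fin (3+3) → ℝ) :=
  {x | (0 ≤ x 0 ∧ 0 ≤ x 1 ∧ 0 ≤ x 2 ∧ 0 ≤ x 3 ∧ 0 ≤ x 4 ∧ 0 ≤ x 5) ∧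
    (x 0 + x 3 ≤ 1 ∧ x 0 + x 4 ≤ 1 ∧ x 0 + x 5 ≤ 1 ∧
     x 1 + x 3 ≤ 1 ∧ x 1 + x 4 ≤ 1 ∧ x 1 + x 5 ≤ 1 ∧
     x 2 + x 3 ≤ 1 ∧ x 2 + x 4 ≤ 1 ∧ x 2 + x 5 ≤ 1) ∧
    (x 0 ≤ 1 ∧ x 1 ≤ 1 ∧ x 2 ≤ 1 ∧ x 3 ≤ 1 ∧ x 4 ≤ 1 ∧ x 5 ≤ 1) ∧
    x 0 + x 1 + x 2 ≤ 2 ∧ x 3 + x 4 + x 5 ≤ 2}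

set_option maxHeartbeats 2000000 in
private lemma convex_Ubox : Convex ℝ Ubox := by
  intro x hx y hy a b ha hb hab
  simp only [Ubox, Set.mem_setOf_eq, Pi.add_apply, Pi.smul_apply, smul_eq_mul] at *
  obtain ⟨⟨p0,p1,p2,p3,p4,p5⟩,⟨q0,q1,q2,q3,q4,q5,q6,q7,q8⟩,⟨u0,u1,u2,u3,u4,u5⟩,s1,s2⟩ := hx
  obtain ⟨⟨P0,P1,P2,P3,P4,P5⟩,⟨Q0,Q1,Q2,Q3,Q4,Q5,Q6,Q7,Q8⟩,⟨U0,U1,U2,U3,U4,U5⟩,S1,S2⟩ := hy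
  exact ⟨⟨cvx_nn ha hb p0 P0, cvx_nn ha hb p1 P1, cvx_nn ha hb p2 P2,
      cvx_nn ha hb p3 P3, cvx_nn ha hb p4 P4, cvx_nn ha hb p5 P5⟩,
    ⟨cvx_le2 ha hb hab q0 Q0, cvx_le2 ha hb hab q1 Q1, cvx_le2 ha hb hab q2 Q2,
     cvx_le2 ha hb hab q3 Q3, cvx_le2 ha hb hab q4 Q4, cvx_le2 ha hb hab q5 Q5,
     cvx_le2 ha hb hab q6 Q6, cvx_le2 ha hb hab q7 Q7, cvx_le2 ha hb hab q8 Q8⟩,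
    ⟨cvx_le ha hb hab u0 U0, cvx_le ha hb hab u1 U1, cvx_le ha hb hab u2 U2,
     cvx_le ha hb hab u3 U3, cvx_le ha hb hab u4 U4, cvx_le ha hb hab u5 U5⟩,
    cvx_le3 ha hb hab s1 S1, cvx_le3 ha hb hab s2 S2⟩

private lemma freeSum_subset_Ubox (P : Set (Fin 3 → ℝ))
    (hP : P = convexHull ℝ
      ({![0,0,0], ![1,1,0], ![1,0,1], ![0,1,1], ![1,0,0]} : Set (Fin 3 → ℝ))) :
    freeSum 3 3 P P ⊆ Ubox := by
  have hPb := Pbounds P hP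
  have hconvU : Convex ℝ Ubox := convex_Ubox
  have hgen : muMap 3 3 '' P ∪ nuMap 3 3 '' P ⊆ Ubox := by
    rintro x (⟨a, haP, rfl⟩ | ⟨a, haP, rfl⟩) <;>
      obtain ⟨⟨h0,h1,h2⟩,⟨h3,h4,h5⟩,h6⟩ := hPb a haP
    · simp only [Ubox, Set.mem_setOf_eq, mu0, mu1, mu2, mu3, mu4, mu5, add_zero, zero_add]
      exact ⟨⟨h0,h1,h2,le_refl 0,le_refl 0,le_refl 0⟩, ⟨h3,h3,h3,h4,h4,h4,h5,h5,h5⟩,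
        ⟨h3,h4,h5,by norm_num,by norm_num,by norm_num⟩, h6, by norm_num⟩
    · simp only [Ubox, Set.mem_setOf_eq, nu0, nu1, nu2, nu3, nu4, nu5, add_zero, zero_add]
      exact ⟨⟨le_refl 0,le_refl 0,le_refl 0,h0,h1,h2⟩, ⟨h3,h4,h5,h3,h4,h5,h3,h4,h5⟩,
        ⟨by norm_num,by norm_num,by norm_num,h3,h4,h5⟩, by norm_num, h6⟩
  exact convexHull_min hgen hconvU

end Aux
set_option maxHeartbeats 2000000 in
theorem example_freeSum_not_hasIDP (P : Set (Fin 3 → ℝ))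
    (hP : P = convexHull ℝ
      ({![0,0,0], ![1,1,0], ![1,0,1], ![0,1,1], ![1,0,0]} : Set (Fin 3 → ℝ))) :
    ∃ n : ℕ, 1 ≤ n ∧ ∃ γ : Fin (3 + 3) → ℝ,
      γ ∈ (n : ℝ) • freeSum 3 3 P P ∧ IsLatticePt (3 + 3) γ ∧
        ¬ ∃ f : Fin n → (Fin (3 + 3) → ℝ),
            (∀ i, f i ∈ latticePts (3 + 3) (freeSum 3 3 P P)) ∧ γ = ∑ i, f i := by
  refine ⟨3, by norm_num, (fun _ => 1), ?_, fun i => ⟨1, by norm_num⟩, ?_⟩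
  · -- membership of the all-ones vector in 3 • (P ⊕ P)
    have hPc : Convex ℝ P := hP ▸ convex_convexHull ℝ _
    have hv2 : (![1,1,0] : Fin 3 → ℝ) ∈ P := by
      rw [hP]; exact subset_convexHull ℝ _ (by simp)
    have hv3 : (![1,0,1] : Fin 3 → ℝ) ∈ P := by
      rw [hP]; exact subset_convexHull ℝ _ (by simp)
    have hv4 : (![0,1,1] : Fin 3 → ℝ) ∈ P := by
      rw [hP]; exact subset_convexHull ℝ _ (by simp)
    have hm : ((1/2 : ℝ) • (![1,1,0] : Fin 3 → ℝ) + (1/2 : ℝ) • ![1,0,1]) ∈ P :=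
      hPc hv2 hv3 (by norm_num) (by norm_num) (by norm_num)
    have hw : (fun _ => (2/3 : ℝ) : Fin 3 → ℝ) ∈ P := by
      have := hPc hm hv4 (le_of_lt (by norm_num : (0:ℝ) < 2/3))
        (le_of_lt (by norm_num : (0:ℝ) < 1/3)) (by norm_num)
      convert this using 1
      funext i; fin_cases i <;> norm_num
    have hmu : muMap 3 3 (fun _ => (2/3 : ℝ)) ∈ freeSum 3 3 P P :=
      subset_convexHull ℝ _ (Or.inl ⟨_, hw, rfl⟩)
    have hnu : nuMap 3 3 (fun _ => (2/3 : ℝ)) ∈ freeSum 3 3 P P :=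
      subset_convexHull ℝ _ (Or.inr ⟨_, hw, rfl⟩)
    have hconv : Convex ℝ (freeSum 3 3 P P) := convex_convexHull ℝ _
    have hx : (fun _ => (1/3 : ℝ) : Fin (3+3) → ℝ) ∈ freeSum 3 3 P P := by
      have := hconv hmu hnu (by norm_num : (0:ℝ) ≤ 1/2) (by norm_num : (0:ℝ) ≤ 1/2)
        (by norm_num)
      convert this using 1
      rw [mu_apply', nu_apply']
      funext i; fin_cases i <;> norm_num
    refine Set.mem_smul_set.2 ⟨_, hx, ?_⟩
    funext i
    show ((3:ℕ):ℝ) * (1/3 : ℝ) = 1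
    norm_num
  · -- no decomposition into 3 lattice points
    rintro ⟨f, hf, hsum⟩
    have hU := freeSum_subset_Ubox P hP
    -- each coordinate of each f i is 0 or 1
    have hcoord : ∀ i : Fin 3, ∀ k : Fin (3+3), f i k = 0 ∨ f i k = 1 := by
      intro i k
      obtain ⟨hmem, hlat⟩ := hf i
      obtain ⟨⟨h0,h1,h2,h3,h4,h5⟩, _, ⟨u0,u1,u2,u3,u4,u5⟩, _, _⟩ := hU hmem
      obtain ⟨z, hz⟩ := hlat k
      have hlo : (0:ℝ) ≤ f i k := by fin_cases k <;> assumption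
      have hhi : f i k ≤ 1 := by fin_cases k <;> assumption
      rw [hz] at hlo hhi ⊢
      have : (0:ℤ) ≤ z := by exact_mod_cast hlo
      have : z ≤ 1 := by exact_mod_cast hhi
      interval_cases z <;> simp
    -- each f i is supported on one side
    have hside : ∀ i : Fin 3,
        (f i 0 = 0 ∧ f i 1 = 0 ∧ f i 2 = 0) ∨ (f i 3 = 0 ∧ f i 4 = 0 ∧ f i 5 = 0) := by
      intro i
      obtain ⟨hmem, _⟩ := hf i
      obtain ⟨_, ⟨q0,q1,q2,q3,q4,q5,q6,q7,q8⟩, _, _, _⟩ := hU hmem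
      rcases hcoord i 0 with e0 | e0 <;> rcases hcoord i 1 with e1 | e1 <;>
        rcases hcoord i 2 with e2 | e2
      · exact Or.inl ⟨e0, e1, e2⟩
      all_goals
        refine Or.inr ⟨?_, ?_, ?_⟩ <;>
          rcases hcoord i 3 with e3 | e3 <;> rcases hcoord i 4 with e4 | e4 <;>
            rcases hcoord i 5 with e5 | e5 <;> linarith
    -- the coordinate sums
    have heq : ∀ k : Fin (3+3), f 0 k + f 1 k + f 2 k = 1 := by
      intro k
      have : (fun _ => (1:ℝ) : Fin (3+3) → ℝ) k = (∑ i : Fin 3, f i) k := by rw [hsum]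
      simpa [Fin.sum_univ_three] using this.symm
    have hs : ∀ i : Fin 3, f i 0 + f i 1 + f i 2 ≤ 2 ∧ f i 3 + f i 4 + f i 5 ≤ 2 := by
      intro i
      obtain ⟨hmem, _⟩ := hf i
      obtain ⟨_, _, _, s1, s2⟩ := hU hmem
      exact ⟨s1, s2⟩
    have e0 := heq 0; have e1 := heq 1; have e2 := heq 2
    have e3 := heq 3; have e4 := heq 4; have e5 := heq 5
    obtain ⟨sa0, sb0⟩ := hs 0; obtain ⟨sa1, sb1⟩ := hs 1; obtain ⟨sa2, sb2⟩ := hs 2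
    rcases hside 0 with ⟨a0,a1,a2⟩ | ⟨b0,b1,b2⟩ <;>
      rcases hside 1 with ⟨c0,c1,c2⟩ | ⟨d0,d1,d2⟩ <;>
        rcases hside 2 with ⟨g0,g1,g2⟩ | ⟨h0,h1,h2⟩ <;> linarith
end

section
/- Let P ⊂ ℝ^d be a (0,1)-polytope containing 0_d and let Q ⊂ ℝ^e be any integral convex polytope containing 0_e. Then condition (★) holds, i.e., (P ⊕ Q) ∩ ℤ^{d+e} = μ(P ∩ ℤ^d) ∪ ν(Q ∩ ℤ^e). -/
open scoped BigOperators Pointwise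

def muLin (d e : ℕ) : (Fin d → ℝ) →ₗ[ℝ] (Fin (d + e) → ℝ) where
  toFun x := Fin.append x 0
  map_add' x y := by
    funext i
    refine Fin.addCases (fun i => ?_) (fun i => ?_) i <;>
      simp [Fin.append_left, Fin.append_right]
  map_smul' c x := by
    funext i
    refine Fin.addCases (fun i => ?_) (fun i => ?_) i <;>
      simp [Fin.append_left, Fin.append_right]

def nuLin (d e : ℕ) : (Fin e → ℝ) →ₗ[ℝ] (Fin (d + e) → ℝ) where
  toFun y := Fin.append 0 y
  map_add' x y := by
    funext i
    refine Fin.addCases (fun i => ?_) (fun i => ?_) i <;>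
      simp [Fin.append_left, Fin.append_right]
  map_smul' c x := by
    funext i
    refine Fin.addCases (fun i => ?_) (fun i => ?_) i <;>
      simp [Fin.append_left, Fin.append_right]

lemma muLat (d e : ℕ) (x : Fin d → ℝ) (hx : IsLatticePt d x) :
    IsLatticePt (d + e) (muMap d e x) := by
  intro k
  refine Fin.addCases (fun i => ?_) (fun i => ?_) k
  · obtain ⟨m, hm⟩ := hx i
    exact ⟨m, by simpa [muMap, Fin.append_left] using hm⟩
  · exact ⟨0, by simp [muMap, Fin.append_right]⟩

lemma nuLat (d e : ℕ) (y : Fin e → ℝ) (hy : IsLatticePt e y) :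
    IsLatticePt (d + e) (nuMap d e y) := by
  intro k
  refine Fin.addCases (fun i => ?_) (fun i => ?_) k
  · exact ⟨0, by simp [nuMap, Fin.append_left]⟩
  · obtain ⟨m, hm⟩ := hy i
    exact ⟨m, by simpa [nuMap, Fin.append_right] using hm⟩

theorem starCond_of_01 (d e : ℕ) (P : Set (Fin d → ℝ)) (Q : Set (Fin e → ℝ))
    (hP : Is01Polytope d P) (hP0 : (0 : Fin d → ℝ) ∈ P)
    (hQ : IsIntegralPolytope e Q) (hQ0 : (0 : Fin e → ℝ) ∈ Q) :
    StarCond d e P Q := by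

  obtain ⟨S, hS01, hPeq⟩ := hP
  obtain ⟨T, hTlat, hQeq⟩ := hQ
  have hPc : Convex ℝ P := hPeq ▸ convex_convexHull ℝ _
  have hQc : Convex ℝ Q := hQeq ▸ convex_convexHull ℝ _
  have hmu : muMap d e = ⇑(muLin d e) := rfl
  have hnu : nuMap d e = ⇑(nuLin d e) := rfl
  have hPbox : P ⊆ Set.Icc (0 : Fin d → ℝ) 1 := by
    rw [hPeq]
    refine convexHull_min (fun v hv => ?_) (convex_Icc _ _)
    constructor <;> intro i <;> rcases hS01 v hv i with h | h <;> simp [h]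
  have hPbound : ∀ α ∈ P, ∀ i, 0 ≤ α i ∧ α i ≤ 1 := by
    intro α hα i
    obtain ⟨h0, h1⟩ := hPbox hα
    exact ⟨h0 i, h1 i⟩
  ext z
  constructor
  · rintro ⟨hz, hlat⟩
    have hPne : (muMap d e '' P).Nonempty := ⟨_, 0, hP0, rfl⟩
    have hQne : (nuMap d e '' Q).Nonempty := ⟨_, 0, hQ0, rfl⟩
    have hPim : Convex ℝ (muMap d e '' P) := hmu ▸ hPc.linear_image (muLin d e)
    have hQim : Convex ℝ (nuMap d e '' Q) := hnu ▸ hQc.linear_image (nuLin d e)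
    rw [freeSum, convexHull_union hPne hQne, hPim.convexHull_eq,
      hQim.convexHull_eq, mem_convexJoin] at hz
    obtain ⟨x, ⟨α, hα, rfl⟩, y, ⟨β, hβ, rfl⟩, a, b, ha, hb, hab, hzeq⟩ := hz
    have hzl : ∀ i : Fin d, z (Fin.castAdd e i) = a * α i := by
      intro i
      rw [← hzeq]
      simp [muMap, nuMap, Fin.append_left]
    have hzr : ∀ j : Fin e, z (Fin.natAdd d j) = b * β j := by
      intro j
      rw [← hzeq]
      simp [muMap, nuMap, Fin.append_right]
    by_cases hc : ∀ i : Fin d, z (Fin.castAdd e i) = 0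
    · right
      refine ⟨b • β, ⟨?_, ?_⟩, ?_⟩
      · have := hQc hQ0 hβ ha hb hab
        simpa using this
      · intro j
        obtain ⟨m, hm⟩ := hlat (Fin.natAdd d j)
        exact ⟨m, by rw [Pi.smul_apply, smul_eq_mul, ← hzr j, hm]⟩
      · funext k
        refine Fin.addCases (fun i => ?_) (fun j => ?_) k
        · rw [nuMap, Fin.append_left]
          simpa using (hc i).symm
        · rw [nuMap, Fin.append_right]
          rw [Pi.smul_apply, smul_eq_mul, ← hzr j]
    · left
      push_neg at hc
      obtain ⟨i0, hi0⟩ := hc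
      -- a * α i0 is a nonzero integer in [0,1], hence a = 1
      obtain ⟨m, hm⟩ := hlat (Fin.castAdd e i0)
      have hbox := hPbound α hα i0
      have h1 : a * α i0 ≤ 1 := by
        calc a * α i0 ≤ a * 1 := by nlinarith [hbox.1, hbox.2]
        _ ≤ 1 := by linarith
      have h0 : 0 ≤ a * α i0 := mul_nonneg ha hbox.1
      have hmv : (m : ℝ) = a * α i0 := by rw [← hm, hzl i0]
      have hne : m ≠ 0 := by
        intro h
        exact hi0 (by rw [hm, h]; norm_num)
      have ha0 : (0:ℤ) ≤ m := by
        have : (0:ℝ) ≤ (m:ℝ) := by rw [hmv]; exact h0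
        exact_mod_cast this
      have ha1 : m ≤ 1 := by
        have : (m:ℝ) ≤ 1 := by rw [hmv]; exact h1
        exact_mod_cast this
      have hm1 : m = 1 := by omega
      have haeq : a = 1 := by
        have hprod : a * α i0 = 1 := by rw [← hmv, hm1]; norm_num
        nlinarith [hbox.2, h1]
      have hbeq : b = 0 := by linarith
      refine ⟨α, ⟨hα, ?_⟩, ?_⟩
      · intro i
        obtain ⟨m', hm'⟩ := hlat (Fin.castAdd e i)
        refine ⟨m', ?_⟩
        rw [hzl i, haeq, one_mul] at hm'
        exact hm'
      · funext k
        refine Fin.addCases (fun i => ?_) (fun j => ?_) k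
        · rw [muMap, Fin.append_left, hzl i, haeq, one_mul]
        · rw [muMap, Fin.append_right, hzr j, hbeq]
          simp
  · rintro (⟨α, ⟨hα, hαl⟩, rfl⟩ | ⟨β, ⟨hβ, hβl⟩, rfl⟩)
    · exact ⟨subset_convexHull ℝ _ (Or.inl ⟨α, hα, rfl⟩), muLat d e α hαl⟩
    · exact ⟨subset_convexHull ℝ _ (Or.inr ⟨β, hβ, rfl⟩), nuLat d e β hβl⟩
end
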